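/- arXiv:1801.08380 — 2 statements merged into one kernel-verified Lean document; each statement's English description precedes it below -/
import Mathlib

section
/- Let G be an oriented connected degree-3 graph, H a subgraph of G, and v ∈ V_H a vertex with outdeg_H(v) = l > 0 and indeg_H(v) = 0, with outgoing edges f_1, …, f_l ∈ E_H. Then each edge ω_{f_j} is a free face of the complex K(G,H). -/
namespace MorseApprox

variable {α : Type*}

/-- A (finite abstract) simplicial complex: a collection of nonempty finite simplices
closed under taking nonempty subsets. -/
def IsComplex (K : Set (Finset α)) : Prop :=
  (∀ σ ∈ K, σ.Nonempty) ∧ ∀ σ ∈ K, ∀ τ : Finset α, τ ⊆ σ → τ.Nonempty → τ ∈ K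

def IsSubcomplex (L K : Set (Finset α)) : Prop :=
  L ⊆ K ∧ IsComplex L

def IsMaximalFace (K : Set (Finset α)) (τ : Finset α) : Prop :=
  τ ∈ K ∧ ∀ ρ ∈ K, τ ⊆ ρ → ρ = τ

/-- A free face: a non-maximal simplex contained in a unique maximal simplex. -/
def IsFreeFace (K : Set (Finset α)) (σ : Finset α) : Prop :=
  σ ∈ K ∧ ¬ IsMaximalFace K σ ∧ ∃! τ : Finset α, IsMaximalFace K τ ∧ σ ⊆ τ

/-- An elementary collapse removes a free face `σ` together with its unique maximal
coface `τ`, provided `dim τ = dim σ + 1`. -/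
def ElemCollapse (K K' : Set (Finset α)) : Prop :=
  ∃ σ τ : Finset α, IsFreeFace K σ ∧ IsMaximalFace K τ ∧ σ ⊆ τ ∧
    τ.card = σ.card + 1 ∧ K' = K \ {σ, τ}

/-- `K` collapses to `L` via a finite sequence of elementary collapses. -/
def Collapses (K L : Set (Finset α)) : Prop :=
  Relation.ReflTransGen ElemCollapse K L

/-- `K` is collapsible if it collapses to a single vertex. -/
def Collapsible (K : Set (Finset α)) : Prop :=
  ∃ p : α, Collapses K ({({p} : Finset α)} : Set (Finset α))

/-- `K` is connected: its 1-skeleton is connected as a graph. -/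
def ComplexConnected [DecidableEq α] (K : Set (Finset α)) : Prop :=
  ∀ x y : α, ({x} : Finset α) ∈ K → ({y} : Finset α) ∈ K →
    Relation.ReflTransGen (fun a b : α => ({a, b} : Finset α) ∈ K ∧ a ≠ b) x y

/-- `σ` is a facet of `τ`. -/
def IsFacet (σ τ : Finset α) : Prop :=
  σ ⊆ τ ∧ τ.card = σ.card + 1

/-- The step relation of the Hasse diagram of `K` modified by the matching `V`:
an edge `τ → σ'` for every facet `σ'` of `τ` with `(σ', τ) ∉ V`, and an
edge `σ → τ` for every `(σ, τ) ∈ V`. -/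
def VStep (K : Set (Finset α)) (V : Set (Finset α × Finset α)) :
    Finset α → Finset α → Prop := fun x y =>
  (x ∈ K ∧ y ∈ K ∧ IsFacet y x ∧ (y, x) ∉ V) ∨ (x, y) ∈ V

/-- A discrete gradient vector field (Morse matching) on `K`. -/
def IsDGVF (K : Set (Finset α)) (V : Set (Finset α × Finset α)) : Prop :=
  (∀ p ∈ V, p.1 ∈ K ∧ p.2 ∈ K ∧ IsFacet p.1 p.2) ∧
  (∀ p ∈ V, ∀ q ∈ V,
    (p.1 = q.1 ∨ p.1 = q.2 ∨ p.2 = q.1 ∨ p.2 = q.2) → p = q) ∧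
  (∀ σ : Finset α, ¬ Relation.TransGen (VStep K V) σ σ)

/-- A critical simplex of a gradient vector field. -/
def IsCritical (K : Set (Finset α)) (V : Set (Finset α × Finset α))
    (σ : Finset α) : Prop :=
  σ ∈ K ∧ ∀ p ∈ V, σ ≠ p.1 ∧ σ ≠ p.2

noncomputable def criticalCount (K : Set (Finset α))
    (V : Set (Finset α × Finset α)) : ℕ :=
  {σ : Finset α | IsCritical K V σ}.ncard

noncomputable def regularCount (V : Set (Finset α × Finset α)) : ℕ :=
  {σ : Finset α | ∃ p ∈ V, σ = p.1 ∨ σ = p.2}.ncard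

def twoSimplices (K : Set (Finset α)) : Set (Finset α) :=
  {σ | σ ∈ K ∧ σ.card = 3}

/-- `L` is an erasable subcomplex of `K`. -/
def ErasableSubcomplex (K L : Set (Finset α)) : Prop :=
  ∃ M : Set (Finset α), IsSubcomplex M K ∧ Collapses K M ∧
    K \ M ⊆ L ∧ twoSimplices K \ M = twoSimplices L

/-- A 2-complex is erasable if it collapses to a complex of dimension at most 1. -/
def Erasable (K : Set (Finset α)) : Prop :=
  ∃ L : Set (Finset α), Collapses K L ∧ ∀ σ ∈ L, σ.card ≤ 2

/-- A collapse of `K` onto `M` induced by the gradient `V`: `K ∖ M` is a union of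
pairs of `V`. -/
def InducedCollapse (K M : Set (Finset α)) (V : Set (Finset α × Finset α)) : Prop :=
  IsSubcomplex M K ∧
    ∀ ρ ∈ K \ M, ∃ p ∈ V, (ρ = p.1 ∨ ρ = p.2) ∧ p.1 ∈ K \ M ∧ p.2 ∈ K \ M

/-- `σ` is eventually free in `K`. -/
def EventuallyFree (K : Set (Finset α)) (σ : Finset α) : Prop :=
  ∃ L : Set (Finset α), Collapses K L ∧ IsFreeFace L σ

/-- `σ` is eventually free in `K` through the gradient `V`. -/
def EventuallyFreeThrough (K : Set (Finset α)) (V : Set (Finset α × Finset α))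
    (σ : Finset α) : Prop :=
  ∃ L : Set (Finset α), InducedCollapse K L V ∧ Collapses K L ∧ IsFreeFace L σ

/-- `L` is erasable in `K` through the gradient `V`. -/
def ErasableThrough (K L : Set (Finset α)) (V : Set (Finset α × Finset α)) : Prop :=
  ∃ M : Set (Finset α), InducedCollapse K M V ∧ Collapses K M ∧
    K \ M ⊆ L ∧ twoSimplices K \ M = twoSimplices L

/-- A discrete Morse function on `K`: monotone, and any two distinct simplices with
the same value form a facet pair (hence every level set is a singleton or such a pair). -/
def IsDiscreteMorse (K : Set (Finset α)) (f : Finset α → ℝ) : Prop :=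
  (∀ σ ∈ K, ∀ τ ∈ K, σ ⊆ τ → f σ ≤ f τ) ∧
  (∀ σ ∈ K, ∀ τ ∈ K, σ ≠ τ → f σ = f τ → IsFacet σ τ ∨ IsFacet τ σ)

/-- `er K`: the minimum number of 2-simplices whose removal makes `K` erasable. -/
noncomputable def er (K : Set (Finset α)) : ℕ :=
  sInf {n | ∃ C : Set (Finset α), C ⊆ twoSimplices K ∧ Erasable (K \ C) ∧ n = C.ncard}

/-- The maximum number of regular (matched) simplices over all gradient vector
fields on `K`. -/
noncomputable def optMaxMM (K : Set (Finset α)) : ℕ :=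
  sSup {n | ∃ V : Set (Finset α × Finset α), IsDGVF K V ∧ n = regularCount V}

/-- An oriented graph: a directed graph with no loops and no anti-parallel pairs. -/
def Oriented (E : Finset (α × α)) : Prop :=
  ∀ e ∈ E, e.1 ≠ e.2 ∧ (e.2, e.1) ∉ E

def outdeg [DecidableEq α] (F : Finset (α × α)) (v : α) : ℕ :=
  (F.filter fun e => e.1 = v).card

def indeg [DecidableEq α] (F : Finset (α × α)) (v : α) : ℕ :=
  (F.filter fun e => e.2 = v).card

/-- Total degree (in-degree plus out-degree) at most 3 at every vertex. -/
def Degree3 [DecidableEq α] (E : Finset (α × α)) : Prop :=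
  ∀ v : α, indeg E v + outdeg E v ≤ 3

/-- The underlying undirected graph (on the whole vertex type) is connected. -/
def GraphConnected (E : Finset (α × α)) : Prop :=
  ∀ x y : α, Relation.ReflTransGen (fun a b : α => (a, b) ∈ E ∨ (b, a) ∈ E) x y

/-- An edge set is acyclic if it contains no directed cycle. -/
def AcyclicEdges (A : Set (α × α)) : Prop :=
  ∀ x : α, ¬ Relation.TransGen (fun a b : α => (a, b) ∈ A) x x

/-- The maximum number of edges of an acyclic subgraph of `E`. -/
noncomputable def maxAcyclic [DecidableEq α] (E : Finset (α × α)) : ℕ :=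
  sSup {n | ∃ A : Finset (α × α), A ⊆ E ∧ AcyclicEdges (↑A : Set (α × α)) ∧ n = A.card}

/-- The minimum cardinality of a feedback arc set of `E`. -/
noncomputable def optMinFAS [DecidableEq α] (E : Finset (α × α)) : ℕ :=
  sInf {n | ∃ F : Finset (α × α), F ⊆ E ∧
    AcyclicEdges (↑(E \ F) : Set (α × α)) ∧ n = F.card}

/-- The thirteen triangles of the modified dunce hat, with vertices
`q=0, r=1, s=2, t=3, u=4, v=5, w=6`. -/
def dunceTriangles : Set (Finset (Fin 7)) :=
  {{1, 3, 5}, {1, 3, 6}, {3, 4, 5}, {0, 4, 5}, {0, 2, 5}, {1, 2, 5}, {0, 1, 2},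
   {0, 1, 4}, {1, 4, 6}, {0, 4, 6}, {0, 2, 6}, {2, 3, 6}, {2, 3, 4}}

/-- The modified dunce hat: the thirteen triangles together with all their
nonempty subsets. Distinguished simplices: `ω = {s,u} = {2,4}`, `η = {2,3}`,
`φ = {t,v} = {3,5}`, `ψ = {t,w} = {3,6}`, `Γ = {s,t,u} = {2,3,4}`. -/
def modifiedDunceHat : Set (Finset (Fin 7)) :=
  {σ | σ.Nonempty ∧ ∃ τ ∈ dunceTriangles, σ ⊆ τ}

/-- The vertex identifications defining `K(G,H)` (rules (b)-(e) of the construction),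
on the disjoint union of copies of the modified dunce hat indexed by the edges.
Here `E` is the edge set of `G`, `F ⊆ E` the edge set of the subgraph `H`, and
`lt` the fixed linear order on edges.  Vertex indices: `s=2, t=3, u=4, v=5, w=6`. -/
def glueRel [DecidableEq α] (E F : Finset (α × α)) (lt : α × α → α × α → Prop) :
    (α × α) × Fin 7 → (α × α) × Fin 7 → Prop := fun x y =>
  -- (b): indeg_H(v) = 0, outdeg_H(v) > 0: identify the vertices s_e over outgoing edges
  (∃ e ∈ F, ∃ e' ∈ F, e.1 = e'.1 ∧ indeg F e.1 = 0 ∧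
    x = (e, (2 : Fin 7)) ∧ y = (e', (2 : Fin 7))) ∨
  -- (c): outdeg_H(v) = 0, indeg_H(v) > 0: identify the vertices t_e over incoming edges
  (∃ e ∈ F, ∃ e' ∈ F, e.2 = e'.2 ∧ outdeg F e.2 = 0 ∧
    x = (e, (3 : Fin 7)) ∧ y = (e', (3 : Fin 7))) ∨
  -- (d)(i): indeg_G(v) = 1, outdeg_G(v) = 2, j incoming, k ≺ l outgoing, j,k ∈ F:
  -- identify φ_j ∼ ω_k via u_k ∼ v_j and s_k ∼ t_j
  (∃ j ∈ F, ∃ k ∈ F, ∃ l ∈ E, j.2 = k.1 ∧ l.1 = k.1 ∧ k ≠ l ∧ lt k l ∧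
    indeg E k.1 = 1 ∧ outdeg E k.1 = 2 ∧
    ((x = (k, (4 : Fin 7)) ∧ y = (j, (5 : Fin 7))) ∨
     (x = (k, (2 : Fin 7)) ∧ y = (j, (3 : Fin 7))))) ∨
  -- (d)(ii): j incoming, k ≺ l outgoing, j,l ∈ F:
  -- identify ψ_j ∼ ω_l via u_l ∼ w_j and s_l ∼ t_j
  (∃ j ∈ F, ∃ l ∈ F, ∃ k ∈ E, j.2 = l.1 ∧ k.1 = l.1 ∧ k ≠ l ∧ lt k l ∧
    indeg E l.1 = 1 ∧ outdeg E l.1 = 2 ∧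
    ((x = (l, (4 : Fin 7)) ∧ y = (j, (6 : Fin 7))) ∨
     (x = (l, (2 : Fin 7)) ∧ y = (j, (3 : Fin 7))))) ∨
  -- (e): indeg_G(v) ∈ {1,2}, outdeg_G(v) = 1, j outgoing, k incoming, j,k ∈ F:
  -- identify ω_j ∼ φ_k via u_j ∼ v_k and s_j ∼ t_k
  (∃ j ∈ F, ∃ k ∈ F, k.2 = j.1 ∧
    (indeg E j.1 = 1 ∨ indeg E j.1 = 2) ∧ outdeg E j.1 = 1 ∧
    ((x = (j, (4 : Fin 7)) ∧ y = (k, (5 : Fin 7))) ∨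
     (x = (j, (2 : Fin 7)) ∧ y = (k, (3 : Fin 7)))))

/-- The image in the quotient of a simplex `σ` of the copy `D_e` of the
modified dunce hat. -/
noncomputable def qmap [DecidableEq α] (E F : Finset (α × α))
    (lt : α × α → α × α → Prop) (e : α × α) (σ : Finset (Fin 7)) :
    Finset (Quot (glueRel E F lt)) :=
  letI : DecidableEq (Quot (glueRel E F lt)) := Classical.decEq _
  σ.image fun i => Quot.mk (glueRel E F lt) (e, i)

/-- The complex `K(G,H)`. -/
def KGH [DecidableEq α] (E F : Finset (α × α)) (lt : α × α → α × α → Prop) :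
    Set (Finset (Quot (glueRel E F lt))) :=
  {ρ | ∃ e ∈ F, ∃ σ ∈ modifiedDunceHat, ρ = qmap E F lt e σ}

/-- The copy `D_e` of the modified dunce hat inside `K(G,H)`. -/
def gadgetIn [DecidableEq α] (E F : Finset (α × α)) (lt : α × α → α × α → Prop)
    (e : α × α) : Set (Finset (Quot (glueRel E F lt))) :=
  {ρ | ∃ σ ∈ modifiedDunceHat, ρ = qmap E F lt e σ}

/-- The edge `ω_e = {s_e, u_e}` inside `K(G,H)`. -/
noncomputable def omegaIn [DecidableEq α] (E F : Finset (α × α))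
    (lt : α × α → α × α → Prop) (e : α × α) : Finset (Quot (glueRel E F lt)) :=
  qmap E F lt e {2, 4}

/-- The triangle `Γ_e = {s_e, t_e, u_e}` inside `K(G,H)`. -/
noncomputable def gammaIn [DecidableEq α] (E F : Finset (α × α))
    (lt : α × α → α × α → Prop) (e : α × α) : Finset (Quot (glueRel E F lt)) :=
  qmap E F lt e {2, 3, 4}


section Aux

variable {α : Type*} [DecidableEq α]

lemma no_incoming {F : Finset (α × α)} {v : α} (h : indeg F v = 0) :
    ∀ e ∈ F, e.2 ≠ v := by
  intro e he hev
  have hmem : e ∈ F.filter (fun e => e.2 = v) := Finset.mem_filter.2 ⟨he, hev⟩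
  rw [indeg, Finset.card_eq_zero] at h
  simp [h] at hmem

lemma eqvgen_iff {β : Type*} {r : β → β → Prop} {P : β → Prop}
    (h : ∀ a b, r a b → (P a ↔ P b)) {a b : β} (hab : Relation.EqvGen r a b) :
    P a ↔ P b := by
  induction hab with
  | rel a b hr => exact h a b hr
  | refl a => exact Iff.rfl
  | symm a b _ ih => exact ih.symm
  | trans a b c _ _ ih1 ih2 => exact ih1.trans ih2

lemma inv4 {E F : Finset (α × α)} {lt : α × α → α × α → Prop} {v : α}
    (hin : indeg F v = 0) (f : α × α) (hfv : f.1 = v) :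
    ∀ a b : (α × α) × Fin 7, glueRel E F lt a b →
      (a = (f, (4 : Fin 7)) ↔ b = (f, (4 : Fin 7))) := by
  have hni := no_incoming (F := F) hin
  intro a b hab
  rcases hab with
      ⟨e, he, e', he', h1, h2, rfl, rfl⟩
    | ⟨e, he, e', he', h1, h2, rfl, rfl⟩
    | ⟨j, hj, k, hk, l, hl, h1, h2, h3, h4, h5, h6, ⟨rfl, rfl⟩ | ⟨rfl, rfl⟩⟩
    | ⟨j, hj, l, hl, k, hk, h1, h2, h3, h4, h5, h6, ⟨rfl, rfl⟩ | ⟨rfl, rfl⟩⟩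
    | ⟨j, hj, k, hk, h1, h2, h3, ⟨rfl, rfl⟩ | ⟨rfl, rfl⟩⟩ <;>
    simp only [Prod.mk.injEq] <;>
    constructor <;>
    rintro ⟨rfl, h⟩ <;>
    first
      | (exfalso; revert h; decide)
      | exact absurd (h1.trans hfv) (hni _ hj)
      | exact absurd (h1.trans hfv) (hni _ hk)

lemma inv2 {E F : Finset (α × α)} {lt : α × α → α × α → Prop} {v : α}
    (hin : indeg F v = 0) :
    ∀ a b : (α × α) × Fin 7, glueRel E F lt a b →
      ((a.1 ∈ F ∧ a.1.1 = v ∧ a.2 = (2 : Fin 7)) ↔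
       (b.1 ∈ F ∧ b.1.1 = v ∧ b.2 = (2 : Fin 7))) := by
  have hni := no_incoming (F := F) hin
  intro a b hab
  rcases hab with
      ⟨e, he, e', he', h1, h2, rfl, rfl⟩
    | ⟨e, he, e', he', h1, h2, rfl, rfl⟩
    | ⟨j, hj, k, hk, l, hl, h1, h2, h3, h4, h5, h6, ⟨rfl, rfl⟩ | ⟨rfl, rfl⟩⟩
    | ⟨j, hj, l, hl, k, hk, h1, h2, h3, h4, h5, h6, ⟨rfl, rfl⟩ | ⟨rfl, rfl⟩⟩
    | ⟨j, hj, k, hk, h1, h2, h3, ⟨rfl, rfl⟩ | ⟨rfl, rfl⟩⟩ <;>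
    dsimp only <;>
    constructor <;>
    rintro ⟨hmem, hv, hidx⟩ <;>
    first
      | (exfalso; revert hidx; decide)
      | exact ⟨he', h1.symm.trans hv, rfl⟩
      | exact ⟨he, h1.trans hv, rfl⟩
      | exact absurd (h1.trans hv) (hni _ hj)
      | exact absurd (h1.trans hv) (hni _ hk)

lemma inv3 {E F : Finset (α × α)} {lt : α × α → α × α → Prop} (f : α × α) :
    ∀ a b : (α × α) × Fin 7, glueRel E F lt a b →
      (((a.2 = (3 : Fin 7) ∧ a.1.2 = f.2) ∨ (a.2 = (2 : Fin 7) ∧ a.1.1 = f.2)) ↔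
       ((b.2 = (3 : Fin 7) ∧ b.1.2 = f.2) ∨ (b.2 = (2 : Fin 7) ∧ b.1.1 = f.2))) := by
  intro a b hab
  rcases hab with
      ⟨e, he, e', he', h1, h2, rfl, rfl⟩
    | ⟨e, he, e', he', h1, h2, rfl, rfl⟩
    | ⟨j, hj, k, hk, l, hl, h1, h2, h3, h4, h5, h6, ⟨rfl, rfl⟩ | ⟨rfl, rfl⟩⟩
    | ⟨j, hj, l, hl, k, hk, h1, h2, h3, h4, h5, h6, ⟨rfl, rfl⟩ | ⟨rfl, rfl⟩⟩
    | ⟨j, hj, k, hk, h1, h2, h3, ⟨rfl, rfl⟩ | ⟨rfl, rfl⟩⟩ <;>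
    dsimp only <;>
    constructor <;>
    rintro (⟨hi, hv⟩ | ⟨hi, hv⟩) <;>
    first
      | (exfalso; revert hi; decide)
      | exact Or.inl ⟨rfl, h1.trans hv⟩
      | exact Or.inl ⟨rfl, h1.symm.trans hv⟩
      | exact Or.inr ⟨rfl, h1.trans hv⟩
      | exact Or.inr ⟨rfl, h1.symm.trans hv⟩

lemma mem_qmap {E F : Finset (α × α)} {lt : α × α → α × α → Prop} {e : α × α}
    {σ : Finset (Fin 7)} {x : Quot (glueRel E F lt)} :
    x ∈ qmap E F lt e σ ↔ ∃ i ∈ σ, Quot.mk (glueRel E F lt) (e, i) = x := by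
  simp [qmap]

lemma qmap_mono {E F : Finset (α × α)} {lt : α × α → α × α → Prop} {e : α × α}
    {σ σ' : Finset (Fin 7)} (h : σ ⊆ σ') : qmap E F lt e σ ⊆ qmap E F lt e σ' := by
  intro x hx
  obtain ⟨i, hi, hq⟩ := mem_qmap.mp hx
  exact mem_qmap.mpr ⟨i, h hi, hq⟩

lemma subset_234 {σ : Finset (Fin 7)} (hσ : σ ∈ modifiedDunceHat)
    (h2 : (2 : Fin 7) ∈ σ) (h4 : (4 : Fin 7) ∈ σ) :
    σ ⊆ ({2, 3, 4} : Finset (Fin 7)) := by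
  obtain ⟨-, τ, hτ, hsub⟩ := hσ
  have h2' := hsub h2
  have h4' := hsub h4
  simp only [dunceTriangles, Set.mem_insert_iff, Set.mem_singleton_iff] at hτ
  rcases hτ with rfl|rfl|rfl|rfl|rfl|rfl|rfl|rfl|rfl|rfl|rfl|rfl|rfl <;>
    first
      | exact hsub
      | (exfalso; revert h2' h4'; decide)

end Aux

/-- if `v` has `indeg_H(v) = 0` and `outdeg_H(v) > 0`, then `ω_f` is a
free face of `K(G,H)` for every outgoing edge `f ∈ E_H` of `v`. -/
theorem stmt9 {α : Type*} [DecidableEq α] (E F : Finset (α × α))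
    (lt : α × α → α × α → Prop) [IsStrictTotalOrder (α × α) lt]
    (hor : Oriented E) (hconn : GraphConnected E) (hdeg : Degree3 E)
    (hF : F ⊆ E) (v : α) (hin : indeg F v = 0) (hout : 0 < outdeg F v) :
    ∀ f ∈ F, f.1 = v → IsFreeFace (KGH E F lt) (omegaIn E F lt f) := by
  intro f hfF hf1
  have hne : f.1 ≠ f.2 := (hor f (hF hfF)).1
  have hq4 : ∀ x : (α × α) × Fin 7,
      Quot.mk (glueRel E F lt) x = Quot.mk (glueRel E F lt) (f, (4 : Fin 7)) →
      x = (f, (4 : Fin 7)) := fun x h =>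
    (eqvgen_iff (inv4 (E := E) (lt := lt) hin f hf1) (Quot.eq.mp h)).mpr rfl
  have hq2 : ∀ x : (α × α) × Fin 7,
      Quot.mk (glueRel E F lt) x = Quot.mk (glueRel E F lt) (f, (2 : Fin 7)) →
      x.1 ∈ F ∧ x.1.1 = v ∧ x.2 = (2 : Fin 7) := fun x h =>
    (eqvgen_iff (inv2 (E := E) (lt := lt) hin) (Quot.eq.mp h)).mpr ⟨hfF, hf1, rfl⟩
  have hq3 : ∀ x : (α × α) × Fin 7,
      Quot.mk (glueRel E F lt) x = Quot.mk (glueRel E F lt) (f, (3 : Fin 7)) →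
      (x.2 = (3 : Fin 7) ∧ x.1.2 = f.2) ∨ (x.2 = (2 : Fin 7) ∧ x.1.1 = f.2) := fun x h =>
    (eqvgen_iff (inv3 (E := E) (F := F) (lt := lt) f) (Quot.eq.mp h)).mpr
      (Or.inl ⟨rfl, rfl⟩)
  have htri : ({2, 3, 4} : Finset (Fin 7)) ∈ dunceTriangles := by
    simp only [dunceTriangles, Set.mem_insert_iff, Set.mem_singleton_iff]
    decide
  have hmdh24 : ({2, 4} : Finset (Fin 7)) ∈ modifiedDunceHat :=
    ⟨by decide, {2, 3, 4}, htri, by decide⟩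
  have hmdh234 : ({2, 3, 4} : Finset (Fin 7)) ∈ modifiedDunceHat :=
    ⟨by decide, {2, 3, 4}, htri, Finset.Subset.refl _⟩
  have homega : omegaIn E F lt f ∈ KGH E F lt := ⟨f, hfF, {2, 4}, hmdh24, rfl⟩
  have hgamma : gammaIn E F lt f ∈ KGH E F lt := ⟨f, hfF, {2, 3, 4}, hmdh234, rfl⟩
  have hsubog : omegaIn E F lt f ⊆ gammaIn E F lt f := qmap_mono (by decide)
  have hw4mem : Quot.mk (glueRel E F lt) (f, (4 : Fin 7)) ∈ omegaIn E F lt f :=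
    mem_qmap.mpr ⟨4, by decide, rfl⟩
  have hw2mem : Quot.mk (glueRel E F lt) (f, (2 : Fin 7)) ∈ omegaIn E F lt f :=
    mem_qmap.mpr ⟨2, by decide, rfl⟩
  have hg3mem : Quot.mk (glueRel E F lt) (f, (3 : Fin 7)) ∈ gammaIn E F lt f :=
    mem_qmap.mpr ⟨3, by decide, rfl⟩
  have h3notin : Quot.mk (glueRel E F lt) (f, (3 : Fin 7)) ∉ omegaIn E F lt f := by
    intro hmem
    obtain ⟨i, hi, hqi⟩ := mem_qmap.mp hmem
    rcases hq3 _ hqi with ⟨h3, -⟩ | ⟨-, hbad⟩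
    · have hi3 : i = (3 : Fin 7) := h3
      rw [hi3] at hi
      revert hi; decide
    · exact hne hbad
  -- the key structural fact: any simplex of K(G,H) containing ω_f comes from the copy D_f
  have hkey : ∀ e ∈ F, ∀ σ ∈ modifiedDunceHat,
      omegaIn E F lt f ⊆ qmap E F lt e σ →
      e = f ∧ (2 : Fin 7) ∈ σ ∧ (4 : Fin 7) ∈ σ := by
    intro e heF σ hσ hsub
    obtain ⟨i, hiσ, hiq⟩ := mem_qmap.mp (hsub hw4mem)
    have hei := hq4 _ hiq
    have he : e = f := congrArg Prod.fst hei
    have hi4 : i = (4 : Fin 7) := congrArg Prod.snd hei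
    subst he
    rw [hi4] at hiσ
    obtain ⟨i2, hi2σ, h2q⟩ := mem_qmap.mp (hsub hw2mem)
    have hi2 : i2 = (2 : Fin 7) := (hq2 _ h2q).2.2
    rw [hi2] at hi2σ
    exact ⟨rfl, hi2σ, hiσ⟩
  have hmaxG : IsMaximalFace (KGH E F lt) (gammaIn E F lt f) := by
    refine ⟨hgamma, ?_⟩
    rintro ρ ⟨e, heF, σ, hσ, rfl⟩ hsub
    obtain ⟨rfl, h2σ, h4σ⟩ := hkey e heF σ hσ (hsubog.trans hsub)
    obtain ⟨i3, hi3σ, h3q⟩ := mem_qmap.mp (hsub hg3mem)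
    have h3σ : (3 : Fin 7) ∈ σ := by
      rcases hq3 _ h3q with ⟨h3, -⟩ | ⟨-, hbad⟩
      · have hi3 : i3 = (3 : Fin 7) := h3
        rw [hi3] at hi3σ; exact hi3σ
      · exact absurd hbad hne
    have hσeq : σ = ({2, 3, 4} : Finset (Fin 7)) := by
      refine Finset.Subset.antisymm (subset_234 hσ h2σ h4σ) ?_
      intro x hx
      simp only [Finset.mem_insert, Finset.mem_singleton] at hx
      rcases hx with rfl | rfl | rfl
      exacts [h2σ, h3σ, h4σ]
    rw [hσeq]
    rfl
  refine ⟨homega, ?_, gammaIn E F lt f, ⟨hmaxG, hsubog⟩, ?_⟩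
  · rintro ⟨-, hmax⟩
    have heq := hmax _ hgamma hsubog
    exact h3notin (heq ▸ hg3mem)
  · rintro τ ⟨⟨hτK, hτmax⟩, hωτ⟩
    obtain ⟨e, heF, σ, hσ, rfl⟩ := hτK
    obtain ⟨rfl, h2σ, h4σ⟩ := hkey e heF σ hσ hωτ
    have hτG : qmap E F lt e σ ⊆ gammaIn E F lt e :=
      qmap_mono (subset_234 hσ h2σ h4σ)
    exact (hτmax _ hgamma hτG).symm


end MorseApprox
end

section
/- Let G be an oriented connected degree-3 graph and let C be a set of 2-simplices of K(G) such that the complex K(G) ∖ C is erasable. Then F = { f ∈ E : C ∩ D_f ≠ ∅ } is a feedback arc set of G, i.e., the subgraph (V, E ∖ F) contains no directed cycle. -/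
namespace MorseApprox

variable {α : Type*}

section Stmt13Aux

def dunceList : List (Finset (Fin 7)) :=
  [{1,3,5},{1,3,6},{3,4,5},{0,4,5},{0,2,5},{1,2,5},{0,1,2},
   {0,1,4},{1,4,6},{0,4,6},{0,2,6},{2,3,6},{2,3,4}]

lemma mem_dunceList_iff (T : Finset (Fin 7)) : T ∈ dunceTriangles ↔ T ∈ dunceList := by
  simp [dunceTriangles, dunceList]

lemma dunce_card : ∀ T ∈ dunceList, T.card = 3 := by
  set_option maxRecDepth 100000 in decide

lemma dunce_two_cofaces : ∀ T ∈ dunceList, ∀ B : Finset (Fin 7), B ⊆ T → B.card = 2 →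
    B ≠ {2,4} → ∃ T1 ∈ dunceList, ∃ T2 ∈ dunceList, T1 ≠ T2 ∧ B ⊆ T1 ∧ B ⊆ T2 := by
  set_option maxRecDepth 100000 in decide

variable {α : Type*} [DecidableEq α] (E : Finset (α × α)) (lt : α × α → α × α → Prop)

open Classical in
/-- The `lt`-least outgoing edge at `v`, if a least one exists. -/
noncomputable def chmin (v : α) : Option (α × α) :=
  if h : ∃ m, m ∈ E.filter (fun f => f.1 = v) ∧
      ∀ x ∈ E.filter (fun f => f.1 = v), x ≠ m → lt m x
  then some h.choose else none

open Classical in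
/-- The `lt`-greatest outgoing edge at `v`, if a greatest one exists. -/
noncomputable def chmax (v : α) : Option (α × α) :=
  if h : ∃ m, m ∈ E.filter (fun f => f.1 = v) ∧
      ∀ x ∈ E.filter (fun f => f.1 = v), x ≠ m → lt x m
  then some h.choose else none

lemma chmin_eq [IsStrictTotalOrder (α × α) lt] {v : α} {m : α × α}
    (hm : m ∈ E.filter (fun f => f.1 = v))
    (hmin : ∀ x ∈ E.filter (fun f => f.1 = v), x ≠ m → lt m x) :
    chmin E lt v = some m := by
  have h : ∃ m', m' ∈ E.filter (fun f => f.1 = v) ∧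
      ∀ x ∈ E.filter (fun f => f.1 = v), x ≠ m' → lt m' x := ⟨m, hm, hmin⟩
  rw [chmin, dif_pos h]
  obtain ⟨hm', hmin'⟩ := h.choose_spec
  congr 1
  by_contra hne
  have h1 : lt h.choose m := hmin' m hm (Ne.symm hne)
  have h2 : lt m h.choose := hmin h.choose hm' hne
  exact absurd (IsTrans.trans _ _ _ h1 h2) (irrefl_of lt _)

lemma chmax_eq [IsStrictTotalOrder (α × α) lt] {v : α} {m : α × α}
    (hm : m ∈ E.filter (fun f => f.1 = v))
    (hmax : ∀ x ∈ E.filter (fun f => f.1 = v), x ≠ m → lt x m) :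
    chmax E lt v = some m := by
  have h : ∃ m', m' ∈ E.filter (fun f => f.1 = v) ∧
      ∀ x ∈ E.filter (fun f => f.1 = v), x ≠ m' → lt x m' := ⟨m, hm, hmax⟩
  rw [chmax, dif_pos h]
  obtain ⟨hm', hmax'⟩ := h.choose_spec
  congr 1
  by_contra hne
  have h1 : lt m h.choose := hmax' m hm (Ne.symm hne)
  have h2 : lt h.choose m := hmax h.choose hm' hne
  exact absurd (IsTrans.trans _ _ _ h1 h2) (irrefl_of lt _)

lemma filter_pair {k l : α × α} {v : α} (hk : k ∈ E) (hl : l ∈ E)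
    (hk1 : k.1 = v) (hl1 : l.1 = v) (hne : k ≠ l) (hdeg : outdeg E v = 2) :
    E.filter (fun f => f.1 = v) = {k, l} := by
  have hsub : ({k, l} : Finset (α × α)) ⊆ E.filter (fun f => f.1 = v) := by
    intro x hx
    rcases Finset.mem_insert.mp hx with rfl | hx
    · exact Finset.mem_filter.mpr ⟨hk, hk1⟩
    · rcases Finset.mem_singleton.mp hx with rfl
      exact Finset.mem_filter.mpr ⟨hl, hl1⟩
  have hcard : (E.filter (fun f => f.1 = v)).card ≤ ({k, l} : Finset (α × α)).card := by
    rw [Finset.card_pair hne]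
    exact le_of_eq hdeg
  exact (Finset.eq_of_subset_of_card_le hsub hcard).symm

lemma chmin_pair [IsStrictTotalOrder (α × α) lt] {k l : α × α} {v : α}
    (hk : k ∈ E) (hl : l ∈ E) (hk1 : k.1 = v) (hl1 : l.1 = v) (hne : k ≠ l)
    (hlt : lt k l) (hdeg : outdeg E v = 2) : chmin E lt v = some k := by
  have hfp := filter_pair E hk hl hk1 hl1 hne hdeg
  apply chmin_eq
  · rw [hfp]; exact Finset.mem_insert_self _ _
  · intro x hx hxk
    rw [hfp] at hx
    rcases Finset.mem_insert.mp hx with rfl | hx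
    · exact absurd rfl hxk
    · rcases Finset.mem_singleton.mp hx with rfl
      exact hlt

lemma chmax_pair [IsStrictTotalOrder (α × α) lt] {k l : α × α} {v : α}
    (hk : k ∈ E) (hl : l ∈ E) (hk1 : k.1 = v) (hl1 : l.1 = v) (hne : k ≠ l)
    (hlt : lt k l) (hdeg : outdeg E v = 2) : chmax E lt v = some l := by
  have hfp := filter_pair E hk hl hk1 hl1 hne hdeg
  apply chmax_eq
  · rw [hfp]; exact Finset.mem_insert_of_mem (Finset.mem_singleton_self _)
  · intro x hx hxl
    rw [hfp] at hx
    rcases Finset.mem_insert.mp hx with rfl | hx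
    · exact hlt
    · rcases Finset.mem_singleton.mp hx with rfl
      exact absurd rfl hxl

lemma chmin_single [IsStrictTotalOrder (α × α) lt] {j : α × α} {v : α}
    (hj : j ∈ E) (hj1 : j.1 = v) (hdeg : outdeg E v = 1) : chmin E lt v = some j := by
  have hjf : j ∈ E.filter (fun f => f.1 = v) := Finset.mem_filter.mpr ⟨hj, hj1⟩
  have hfp : E.filter (fun f => f.1 = v) = {j} := by
    have hsub : ({j} : Finset (α × α)) ⊆ E.filter (fun f => f.1 = v) := by
      intro x hx; rcases Finset.mem_singleton.mp hx with rfl; exact hjf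
    have hcard : (E.filter (fun f => f.1 = v)).card ≤ ({j} : Finset (α × α)).card := by
      rw [Finset.card_singleton]; exact le_of_eq hdeg
    exact (Finset.eq_of_subset_of_card_le hsub hcard).symm
  apply chmin_eq
  · exact hjf
  · intro x hx hxj
    rw [hfp] at hx
    exact absurd (Finset.mem_singleton.mp hx) hxj

/-- An invariant of the gluing relation separating the seven vertices of one gadget. -/
noncomputable def Phi (x : (α × α) × Fin 7) :
    ((α × α) × Fin 7) ⊕ (Bool × α × Option (α × α)) :=
  if x.2 = 2 then Sum.inr (false, x.1.1, none)
  else if x.2 = 3 then Sum.inr (false, x.1.2, none)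
  else if x.2 = 4 then Sum.inr (true, x.1.1, some x.1)
  else if x.2 = 5 then Sum.inr (true, x.1.2, chmin E lt x.1.2)
  else if x.2 = 6 then Sum.inr (true, x.1.2, chmax E lt x.1.2)
  else Sum.inl x

lemma phi_glue [IsStrictTotalOrder (α × α) lt] {x y : (α × α) × Fin 7}
    (h : glueRel E E lt x y) : Phi E lt x = Phi E lt y := by
  rcases h with ⟨e, he, e', he', h11, hind, hx, hy⟩ | ⟨e, he, e', he', h22, hout, hx, hy⟩ |
    ⟨j, hj, k, hk, l, hl, hj2, hl1, hne, hlt, hind, hout, hxy⟩ |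
    ⟨j, hj, l, hl, k, hk, hj2, hk1, hne, hlt, hind, hout, hxy⟩ |
    ⟨j, hj, k, hk, hk2, hind, hout, hxy⟩
  · subst hx; subst hy; simp [Phi, h11]
  · subst hx; subst hy; simp [Phi, h22]
  · rcases hxy with ⟨hx, hy⟩ | ⟨hx, hy⟩ <;> subst hx <;> subst hy
    · have hmin : chmin E lt k.1 = some k := chmin_pair E lt hk hl rfl hl1 hne hlt hout
      simp [Phi, hj2, hmin]
    · simp [Phi, hj2]
  · rcases hxy with ⟨hx, hy⟩ | ⟨hx, hy⟩ <;> subst hx <;> subst hy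
    · have hmax : chmax E lt l.1 = some l := chmax_pair E lt hk hl hk1 rfl hne hlt hout
      simp [Phi, hj2, hmax]
    · simp [Phi, hj2]
  · rcases hxy with ⟨hx, hy⟩ | ⟨hx, hy⟩ <;> subst hx <;> subst hy
    · have hmin : chmin E lt j.1 = some j := chmin_single E lt hj rfl hout
      simp [Phi, hk2, hmin]
    · simp [Phi, hk2]

lemma phi_eqv [IsStrictTotalOrder (α × α) lt] {x y : (α × α) × Fin 7}
    (h : Relation.EqvGen (glueRel E E lt) x y) : Phi E lt x = Phi E lt y := by
  induction h with
  | rel _ _ h => exact phi_glue E lt h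
  | refl _ => rfl
  | symm _ _ _ ih => exact ih.symm
  | trans _ _ _ _ _ ih1 ih2 => exact ih1.trans ih2

lemma eqvGen_occurs {β : Type*} {r : β → β → Prop} {a b : β} (h : Relation.EqvGen r a b) :
    a = b ∨ ((∃ x y, r x y ∧ (a = x ∨ a = y)) ∧ (∃ x y, r x y ∧ (b = x ∨ b = y))) := by
  induction h with
  | rel x y h => exact Or.inr ⟨⟨x, y, h, Or.inl rfl⟩, ⟨x, y, h, Or.inr rfl⟩⟩
  | refl _ => exact Or.inl rfl
  | symm _ _ _ ih => rcases ih with h | ⟨h1, h2⟩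
                     · exact Or.inl h.symm
                     · exact Or.inr ⟨h2, h1⟩
  | trans x y z _ _ ih1 ih2 =>
      rcases ih1 with h1 | ⟨ha, hy⟩
      · rw [h1]; exact ih2
      · rcases ih2 with h2 | ⟨hy', hb⟩
        · rw [← h2]; exact Or.inr ⟨ha, hy⟩
        · exact Or.inr ⟨ha, hb⟩

lemma occurs_six {e : α × α}
    (h : ∃ x y, glueRel E E lt x y ∧ (((e, (6 : Fin 7)) = x) ∨ ((e, (6 : Fin 7)) = y))) :
    ∃ k l : α × α, k ∈ E ∧ l ∈ E ∧ e.2 = l.1 ∧ k.1 = l.1 ∧ k ≠ l ∧ lt k l ∧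
      outdeg E l.1 = 2 := by
  obtain ⟨x, y, hxy, h6⟩ := h
  rcases hxy with ⟨e1, he1, e2, he2, h11, hind, hx, hy⟩ |
    ⟨e1, he1, e2, he2, h22, hout, hx, hy⟩ |
    ⟨j, hj, k, hk, l, hl, hj2, hl1, hne, hlt, hind, hout, hxy⟩ |
    ⟨j, hj, l, hl, k, hk, hj2, hk1, hne, hlt, hind, hout, hxy⟩ |
    ⟨j, hj, k, hk, hk2, hind, hout, hxy⟩
  · subst hx; subst hy; rcases h6 with h6 | h6 <;> simp [Prod.ext_iff] at h6
  · subst hx; subst hy; rcases h6 with h6 | h6 <;> simp [Prod.ext_iff] at h6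
  · rcases hxy with ⟨hx, hy⟩ | ⟨hx, hy⟩ <;> subst hx <;> subst hy <;>
      rcases h6 with h6 | h6 <;> simp [Prod.ext_iff] at h6
  · rcases hxy with ⟨hx, hy⟩ | ⟨hx, hy⟩ <;> subst hx <;> subst hy <;>
      rcases h6 with h6 | h6 <;> simp [Prod.ext_iff] at h6
    obtain ⟨h61, h62⟩ := h6
    exact ⟨k, l, hk, hl, by rw [h62]; exact hj2, hk1, hne, hlt, hout⟩
  · rcases hxy with ⟨hx, hy⟩ | ⟨hx, hy⟩ <;> subst hx <;> subst hy <;>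
      rcases h6 with h6 | h6 <;> simp [Prod.ext_iff] at h6

lemma five_ne_six [IsStrictTotalOrder (α × α) lt] (e : α × α) :
    Quot.mk (glueRel E E lt) (e, (5 : Fin 7)) ≠ Quot.mk (glueRel E E lt) (e, (6 : Fin 7)) := by
  intro h
  have heq := Quot.eq.mp h
  rcases eqvGen_occurs heq with h56 | ⟨_, hocc⟩
  · exact absurd h56 (by simp [Prod.ext_iff])
  · obtain ⟨k, l, hk, hl, he2, hk1, hne, hlt, hout⟩ := occurs_six E lt hocc
    have hphi := phi_eqv E lt heq
    have hmin : chmin E lt e.2 = some k := by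
      rw [he2]; exact chmin_pair E lt hk hl hk1 rfl hne hlt hout
    have hmax : chmax E lt e.2 = some l := by
      rw [he2]; exact chmax_pair E lt hk hl hk1 rfl hne hlt hout
    rw [show Phi E lt (e, (5:Fin 7)) = Sum.inr (true, e.2, chmin E lt e.2) by simp [Phi],
        show Phi E lt (e, (6:Fin 7)) = Sum.inr (true, e.2, chmax E lt e.2) by simp [Phi],
        hmin, hmax] at hphi
    simp at hphi
    exact hne hphi

lemma vmap_inj [IsStrictTotalOrder (α × α) lt] (hor : Oriented E) {e : α × α} (he : e ∈ E) :
    Function.Injective (fun i : Fin 7 => Quot.mk (glueRel E E lt) (e, i)) := by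
  intro i j hij
  simp only at hij
  by_contra hne
  have hne12 : e.1 ≠ e.2 := (hor e he).1
  have hphi : Phi E lt (e, i) = Phi E lt (e, j) := phi_eqv E lt (Quot.eq.mp hij)
  have h56 := five_ne_six E lt e
  fin_cases i <;> fin_cases j <;> simp_all [Phi, Prod.ext_iff]

lemma qmap_card [IsStrictTotalOrder (α × α) lt] (hor : Oriented E) {e : α × α}
    (he : e ∈ E) (σ : Finset (Fin 7)) : (qmap E E lt e σ).card = σ.card := by
  unfold qmap
  exact @Finset.card_image_of_injective _ _ _ (Classical.decEq _) σ (vmap_inj E lt hor he)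

lemma qmap_inj' [IsStrictTotalOrder (α × α) lt] (hor : Oriented E) {e : α × α}
    (he : e ∈ E) {T1 T2 : Finset (Fin 7)}
    (h : qmap E E lt e T1 = qmap E E lt e T2) : T1 = T2 := by
  unfold qmap at h
  exact @Finset.image_injective _ _ (Classical.decEq _) _ (vmap_inj E lt hor he) T1 T2 h

lemma qmap_subset (e : α × α) {σ τ : Finset (Fin 7)} (h : σ ⊆ τ) :
    qmap E E lt e σ ⊆ qmap E E lt e τ := by
  unfold qmap
  exact @Finset.image_subset_image _ _ (Classical.decEq _) _ _ _ h

lemma mem_mdh_of_dunceList {T : Finset (Fin 7)} (hT : T ∈ dunceList) :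
    T ∈ modifiedDunceHat := by
  refine ⟨Finset.card_pos.mp ?_, T, (mem_dunceList_iff T).mpr hT, Finset.Subset.refl T⟩
  rw [dunce_card T hT]
  norm_num

lemma kgh_card_le {ρ : Finset (Quot (glueRel E E lt))} (hρ : ρ ∈ KGH E E lt) :
    ρ.card ≤ 3 := by
  obtain ⟨e, he, σ, hσ, rfl⟩ := hρ
  obtain ⟨hne, τ, hτ, hsub⟩ := hσ
  calc (qmap E E lt e σ).card ≤ σ.card := by
        unfold qmap; exact @Finset.card_image_le _ _ σ _ (Classical.decEq _)
    _ ≤ τ.card := Finset.card_le_card hsub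
    _ = 3 := dunce_card τ ((mem_dunceList_iff τ).mp hτ)

lemma maximal_of_card3 {K : Set (Finset (Quot (glueRel E E lt)))}
    (hK : K ⊆ KGH E E lt) {ρ : Finset (Quot (glueRel E E lt))}
    (hρ : ρ ∈ K) (h3 : ρ.card = 3) : IsMaximalFace K ρ := by
  refine ⟨hρ, fun τ hτ hsub => ?_⟩
  refine (Finset.eq_of_subset_of_card_le hsub ?_).symm
  rw [h3]
  exact kgh_card_le E lt (hK hτ)

lemma two_cofaces_absurd [IsStrictTotalOrder (α × α) lt] (hor : Oriented E)
    {K : Set (Finset (Quot (glueRel E E lt)))} (hK : K ⊆ KGH E E lt)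
    {σ₀ : Finset (Quot (glueRel E E lt))} (hfree : IsFreeFace K σ₀)
    {q : α × α} (hq : q ∈ E)
    {T1 T2 : Finset (Fin 7)} (h1 : T1 ∈ dunceList) (h2 : T2 ∈ dunceList) (hne : T1 ≠ T2)
    (hm1 : qmap E E lt q T1 ∈ K) (hm2 : qmap E E lt q T2 ∈ K)
    (hs1 : σ₀ ⊆ qmap E E lt q T1) (hs2 : σ₀ ⊆ qmap E E lt q T2) : False := by
  obtain ⟨-, -, τu, -, huniq⟩ := hfree
  have hmax1 : IsMaximalFace K (qmap E E lt q T1) :=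
    maximal_of_card3 E lt hK hm1 (by rw [qmap_card E lt hor hq]; exact dunce_card T1 h1)
  have hmax2 : IsMaximalFace K (qmap E E lt q T2) :=
    maximal_of_card3 E lt hK hm2 (by rw [qmap_card E lt hor hq]; exact dunce_card T2 h2)
  have e1 := huniq _ ⟨hmax1, hs1⟩
  have e2 := huniq _ ⟨hmax2, hs2⟩
  exact hne (qmap_inj' E lt hor hq (e1.trans e2.symm))

lemma omega_two_cofaces [IsStrictTotalOrder (α × α) lt] (hdeg : Degree3 E)
    {p j : α × α} (hp : p ∈ E) (hj : j ∈ E) (hj2 : j.2 = p.1) :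
    ∃ X T1 T2 : Finset (Fin 7), T1 ∈ dunceList ∧ T2 ∈ dunceList ∧ T1 ≠ T2 ∧
      X ⊆ T1 ∧ X ⊆ T2 ∧ qmap E E lt p {2, 4} = qmap E E lt j X := by
  have hout1 : 1 ≤ outdeg E p.1 :=
    Finset.card_pos.mpr ⟨p, Finset.mem_filter.mpr ⟨hp, rfl⟩⟩
  have hind1 : 1 ≤ indeg E p.1 :=
    Finset.card_pos.mpr ⟨j, Finset.mem_filter.mpr ⟨hj, hj2⟩⟩
  have hd := hdeg p.1
  have hcase : outdeg E p.1 = 1 ∨ outdeg E p.1 = 2 := by omega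
  rcases hcase with hout | hout
  · -- rule (e): the unique outgoing edge at p.1 is p itself
    have hindc : indeg E p.1 = 1 ∨ indeg E p.1 = 2 := by omega
    have h4 : glueRel E E lt (p, (4 : Fin 7)) (j, (5 : Fin 7)) :=
      Or.inr (Or.inr (Or.inr (Or.inr ⟨p, hp, j, hj, hj2, hindc, hout, Or.inl ⟨rfl, rfl⟩⟩)))
    have h2 : glueRel E E lt (p, (2 : Fin 7)) (j, (3 : Fin 7)) :=
      Or.inr (Or.inr (Or.inr (Or.inr ⟨p, hp, j, hj, hj2, hindc, hout, Or.inr ⟨rfl, rfl⟩⟩)))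
    refine ⟨{3, 5}, {1, 3, 5}, {3, 4, 5}, by decide, by decide, by decide, by decide,
      by decide, ?_⟩
    unfold qmap
    simp only [Finset.image_insert, Finset.image_singleton]
    rw [Quot.sound h2, Quot.sound h4]
  · -- outdeg = 2: there is a second outgoing edge p'
    have hind : indeg E p.1 = 1 := by omega
    have hout2 : 1 < (E.filter (fun f => f.1 = p.1)).card := by
      have h2' : (E.filter (fun f => f.1 = p.1)).card = 2 := hout
      omega
    obtain ⟨p', hp'f, hp'ne⟩ := Finset.exists_mem_ne hout2 p
    obtain ⟨hp'E, hp'1⟩ := Finset.mem_filter.mp hp'f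
    rcases trichotomous_of lt p p' with hlt | heq | hlt
    · -- rule (d)(i) with k := p, l := p'
      have h4 : glueRel E E lt (p, (4 : Fin 7)) (j, (5 : Fin 7)) :=
        Or.inr (Or.inr (Or.inl ⟨j, hj, p, hp, p', hp'E, hj2, hp'1, Ne.symm hp'ne, hlt,
          hind, hout, Or.inl ⟨rfl, rfl⟩⟩))
      have h2 : glueRel E E lt (p, (2 : Fin 7)) (j, (3 : Fin 7)) :=
        Or.inr (Or.inr (Or.inl ⟨j, hj, p, hp, p', hp'E, hj2, hp'1, Ne.symm hp'ne, hlt,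
          hind, hout, Or.inr ⟨rfl, rfl⟩⟩))
      refine ⟨{3, 5}, {1, 3, 5}, {3, 4, 5}, by decide, by decide, by decide, by decide,
        by decide, ?_⟩
      unfold qmap
      simp only [Finset.image_insert, Finset.image_singleton]
      rw [Quot.sound h2, Quot.sound h4]
    · exact absurd heq.symm hp'ne
    · -- rule (d)(ii) with k := p', l := p
      have h4 : glueRel E E lt (p, (4 : Fin 7)) (j, (6 : Fin 7)) :=
        Or.inr (Or.inr (Or.inr (Or.inl ⟨j, hj, p, hp, p', hp'E, hj2, hp'1, hp'ne, hlt,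
          hind, hout, Or.inl ⟨rfl, rfl⟩⟩)))
      have h2 : glueRel E E lt (p, (2 : Fin 7)) (j, (3 : Fin 7)) :=
        Or.inr (Or.inr (Or.inr (Or.inl ⟨j, hj, p, hp, p', hp'E, hj2, hp'1, hp'ne, hlt,
          hind, hout, Or.inr ⟨rfl, rfl⟩⟩)))
      refine ⟨{3, 6}, {1, 3, 6}, {2, 3, 6}, by decide, by decide, by decide, by decide,
        by decide, ?_⟩
      unfold qmap
      simp only [Finset.image_insert, Finset.image_singleton]
      rw [Quot.sound h2, Quot.sound h4]

/-- The key invariant step: an elementary collapse cannot remove any triangle of a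
gadget lying on a directed cycle (a predecessor-closed family `S` of edges). -/
lemma key_step [IsStrictTotalOrder (α × α) lt] (hor : Oriented E) (hdeg : Degree3 E)
    (S : Set (α × α)) (hSE : ∀ p ∈ S, p ∈ E)
    (hpred : ∀ p ∈ S, ∃ q ∈ S, q.2 = p.1)
    {K K' : Set (Finset (Quot (glueRel E E lt)))}
    (hKsub : K ⊆ KGH E E lt)
    (hKtri : ∀ p ∈ S, ∀ T ∈ dunceList, qmap E E lt p T ∈ K)
    (hcol : ElemCollapse K K') :
    K' ⊆ KGH E E lt ∧ ∀ p ∈ S, ∀ T ∈ dunceList, qmap E E lt p T ∈ K' := by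
  classical
  obtain ⟨σ₀, τ₀, hfree, hmax, hsub, hcard, rfl⟩ := hcol
  constructor
  · exact fun ρ hρ => hKsub hρ.1
  intro p hp T hT
  have hpE := hSE p hp
  have hmem := hKtri p hp T hT
  have hTcard3 : (qmap E E lt p T).card = 3 := by
    rw [qmap_card E lt hor hpE]
    exact dunce_card T hT
  refine ⟨hmem, ?_⟩
  simp only [Set.mem_insert_iff, Set.mem_singleton_iff]
  push_neg
  constructor
  · -- the triangle cannot be the free face: it is maximal
    intro heq
    exact hfree.2.1 (heq ▸ maximal_of_card3 E lt hKsub hmem hTcard3)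
  · -- the triangle cannot be the removed maximal coface
    intro heq
    have hσcard : σ₀.card = 2 := by
      rw [← heq, hTcard3] at hcard
      omega
    have hσ₀T : σ₀ ⊆ qmap E E lt p T := heq ▸ hsub
    obtain ⟨B, hBT, hqB⟩ : ∃ B : Finset (Fin 7), B ⊆ T ∧ qmap E E lt p B = σ₀ := by
      refine ⟨T.filter (fun i => Quot.mk (glueRel E E lt) (p, i) ∈ σ₀),
        Finset.filter_subset _ _, ?_⟩
      unfold qmap
      apply Finset.Subset.antisymm
      · intro x hx
        obtain ⟨i, hi, rfl⟩ := Finset.mem_image.mp hx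
        exact (Finset.mem_filter.mp hi).2
      · intro x hx
        have hx' := hσ₀T hx
        unfold qmap at hx'
        obtain ⟨i, hi, rfl⟩ := Finset.mem_image.mp hx'
        exact Finset.mem_image.mpr ⟨i, Finset.mem_filter.mpr ⟨hi, hx⟩, rfl⟩
    have hBcard : B.card = 2 := by
      have h := qmap_card E lt hor hpE B
      rw [hqB, hσcard] at h
      omega
    by_cases hB24 : B = {2, 4}
    · -- σ₀ is the edge ω of the gadget of p: glued into the predecessor gadget
      obtain ⟨j, hjS, hj2⟩ := hpred p hp
      have hjE := hSE j hjS
      obtain ⟨X, T1, T2, hT1, hT2, hTne, hXT1, hXT2, homega⟩ :=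
        omega_two_cofaces E lt hdeg hpE hjE hj2
      have hσX : σ₀ = qmap E E lt j X := by rw [← hqB, hB24, homega]
      exact two_cofaces_absurd E lt hor hKsub hfree hjE hT1 hT2 hTne
        (hKtri j hjS T1 hT1) (hKtri j hjS T2 hT2)
        (hσX ▸ qmap_subset E lt j hXT1) (hσX ▸ qmap_subset E lt j hXT2)
    · -- σ₀ is a non-ω edge: it lies in two triangles of the gadget of p
      obtain ⟨T1, hT1, T2, hT2, hTne, hBT1, hBT2⟩ :=
        dunce_two_cofaces T hT B hBT hBcard hB24
      exact two_cofaces_absurd E lt hor hKsub hfree hpE hT1 hT2 hTne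
        (hKtri p hp T1 hT1) (hKtri p hp T2 hT2)
        (hqB ▸ qmap_subset E lt p hBT1) (hqB ▸ qmap_subset E lt p hBT2)

end Stmt13Aux

/-- if `K(G) ∖ C` is erasable for a set `C` of 2-simplices, then
`F = {f ∈ E | C ∩ D_f ≠ ∅}` is a feedback arc set of `G`, i.e. `E ∖ F` is acyclic. -/
theorem stmt13 {α : Type*} [DecidableEq α] (E : Finset (α × α))
    (lt : α × α → α × α → Prop) [IsStrictTotalOrder (α × α) lt]
    (hor : Oriented E) (hconn : GraphConnected E) (hdeg : Degree3 E)
    (C : Set (Finset (Quot (glueRel E E lt))))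
    (hC : C ⊆ twoSimplices (KGH E E lt))
    (her : Erasable (KGH E E lt \ C)) :
    AcyclicEdges {ab : α × α | ab ∈ E ∧ C ∩ gadgetIn E E lt ab = ∅} := by
  intro x hcyc
  set R : α → α → Prop :=
    fun a b => (a, b) ∈ {ab : α × α | ab ∈ E ∧ C ∩ gadgetIn E E lt ab = ∅} with hR
  obtain ⟨z, hxz, hzx⟩ := Relation.TransGen.tail'_iff.mp hcyc
  set S : Set (α × α) := {pq | R pq.1 pq.2 ∧ Relation.ReflTransGen R x pq.1 ∧
    Relation.ReflTransGen R pq.2 x} with hS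
  have hzxS : (z, x) ∈ S := ⟨hzx, hxz, Relation.ReflTransGen.refl⟩
  have hSE : ∀ pq ∈ S, pq ∈ E := fun pq hpq => hpq.1.1
  have hSC : ∀ pq ∈ S, C ∩ gadgetIn E E lt pq = ∅ := fun pq hpq => hpq.1.2
  have hpred : ∀ pq ∈ S, ∃ q ∈ S, q.2 = pq.1 := by
    rintro ⟨a, b⟩ ⟨hab, hxa, hbx⟩
    rcases Relation.ReflTransGen.cases_tail hxa with heq | ⟨c, hxc, hca⟩
    · exact ⟨(z, x), hzxS, heq.symm⟩
    · exact ⟨(c, a), ⟨hca, hxc, Relation.ReflTransGen.head hab hbx⟩, rfl⟩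
  obtain ⟨L, hcolL, hdim⟩ := her
  have hinv : L ⊆ KGH E E lt ∧ ∀ p ∈ S, ∀ T ∈ dunceList, qmap E E lt p T ∈ L := by
    clear hdim
    induction hcolL with
    | refl =>
        constructor
        · exact fun ρ hρ => hρ.1
        · intro p hp T hT
          refine ⟨⟨p, hSE p hp, T, mem_mdh_of_dunceList hT, rfl⟩, ?_⟩
          intro hC'
          have hmem : qmap E E lt p T ∈ C ∩ gadgetIn E E lt p :=
            ⟨hC', T, mem_mdh_of_dunceList hT, rfl⟩
          rw [hSC p hp] at hmem
          exact hmem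
    | tail hsteps hstep ih =>
        exact key_step E lt hor hdeg S hSE hpred ih.1 ih.2 hstep
  have h135 := hinv.2 (z, x) hzxS {1, 3, 5} (by decide)
  have hle := hdim _ h135
  rw [qmap_card E lt hor (hSE _ hzxS)] at hle
  have hc3 : ({1, 3, 5} : Finset (Fin 7)).card = 3 := by decide
  omega

end MorseApprox
end
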